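/- Let (∂ : M →* L, •) be a crossed module of groups, with displacement subgroup [L,M] := Subgroup.closure {x : M | ∃ (l : L) (m : M), x = (l • m) * m⁻¹}, and form the semidirect product M ⋊[φ] L where φ = MulDistribMulAction.toMulAut L M. Then [L,M] = ⊤ if and only if the normal closure in M ⋊[φ] L of the image of the canonical inclusion SemidirectProduct.inr : L →* M ⋊[φ] L is the whole group: Subgroup.normalClosure ↑(MonoidHom.range (SemidirectProduct.inr)) = ⊤. -/

import Mathlib

/-!
Inside `M ⋊ L` one has `inl (l • m) = inr l * inl m * inr l⁻¹`, so every displacement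
`l • m * m⁻¹` lies in the normal closure `N` of `L`; conversely, when `[L,M]` is normal, the map
`M ⋊ L → M ⧸ [L,M]`, `(m, l) ↦ m` is a homomorphism killing `L`, hence `N`. Thus `N ∩ M = [L,M]`,
and since `N` already contains `L`, it is everything exactly when it contains `M`.
-/

namespace MulDistribMulAction

variable (L M : Type*) [Group L] [Group M] [MulDistribMulAction L M]

def displacementSubgroup : Subgroup M :=
  Subgroup.closure {x : M | ∃ (l : L) (m : M), x = (l • m) * m⁻¹}

variable {L M}

theorem smul_mul_inv_mem_displacementSubgroup (l : L) (m : M) :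
    (l • m) * m⁻¹ ∈ displacementSubgroup L M :=
  Subgroup.subset_closure ⟨l, m, rfl⟩

theorem smul_mem_displacementSubgroup {l : L} {x : M} (hx : x ∈ displacementSubgroup L M) :
    l • x ∈ displacementSubgroup L M := by
  induction hx using Subgroup.closure_induction with
  | mem y hy =>
    obtain ⟨l', m, rfl⟩ := hy
    have hsplit : l • ((l' • m) * m⁻¹) = ((l * l') • m * m⁻¹) * (l • m * m⁻¹)⁻¹ := by
      rw [smul_mul', smul_smul, smul_inv']
      group
    rw [hsplit]
    exact Subgroup.mul_mem _ (smul_mul_inv_mem_displacementSubgroup _ _)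
      (Subgroup.inv_mem _ (smul_mul_inv_mem_displacementSubgroup _ _))
  | one => simp
  | mul a b _ _ ha hb => simpa [smul_mul'] using Subgroup.mul_mem _ ha hb
  | inv a _ ha => simpa [smul_inv'] using Subgroup.inv_mem _ ha

/-- The Peiffer identity makes conjugation in `M` a special case of the `L`-action. -/
theorem displacementSubgroup_normal_of_peiffer (d : M →* L)
    (hpeiffer : ∀ (m m' : M), (d m) • m' = m * m' * m⁻¹) :
    (displacementSubgroup L M).Normal where
  conj_mem x hx m := hpeiffer m x ▸ smul_mem_displacementSubgroup hx

theorem mk_smul_eq_mk [(displacementSubgroup L M).Normal] (l : L) (m : M) :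
    ((l • m : M) : M ⧸ displacementSubgroup L M) = (m : M ⧸ displacementSubgroup L M) :=
  QuotientGroup.eq_iff_div_mem.mpr (div_eq_mul_inv (l • m) m ▸
    smul_mul_inv_mem_displacementSubgroup l m)

end MulDistribMulAction

namespace SemidirectProduct

open MulDistribMulAction

variable {L M : Type*} [Group L] [Group M] [MulDistribMulAction L M]

local notation "φ" => MulDistribMulAction.toMulAut L M

theorem eq_top_iff_comap_inl_eq_top {H : Subgroup (M ⋊[φ] L)}
    (hH : (inr : L →* M ⋊[φ] L).range ≤ H) : H = ⊤ ↔ H.comap inl = ⊤ := by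
  refine ⟨fun h ↦ h ▸ Subgroup.comap_top _, fun h ↦ eq_top_iff.mpr fun g _ ↦ ?_⟩
  rw [← inl_left_mul_inr_right g]
  exact H.mul_mem (h ▸ Subgroup.mem_top g.left : g.left ∈ H.comap inl) (hH ⟨g.right, rfl⟩)

theorem displacementSubgroup_le_comap_inl_normalClosure_range_inr :
    displacementSubgroup L M ≤
      (Subgroup.normalClosure ((inr : L →* M ⋊[φ] L).range : Set (M ⋊[φ] L))).comap inl := by
  set N := Subgroup.normalClosure ((inr : L →* M ⋊[φ] L).range : Set (M ⋊[φ] L))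
  have hinr (l : L) : inr l ∈ N := Subgroup.subset_normalClosure ⟨l, rfl⟩
  rw [displacementSubgroup, Subgroup.closure_le]
  rintro _ ⟨l, m, rfl⟩
  have hconj : (inl (l • m * m⁻¹) : M ⋊[φ] L) = inr l * (inl m * inr l⁻¹ * (inl m)⁻¹) := by
    rw [map_mul, map_inv, show l • m = φ l m from rfl, inl_aut]
    group
  show inl (l • m * m⁻¹) ∈ N
  rw [hconj]
  exact N.mul_mem (hinr l) (Subgroup.normalClosure_normal.conj_mem _ (hinr l⁻¹) _)

theorem comap_inl_normalClosure_range_inr_le_displacementSubgroup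
    [(displacementSubgroup L M).Normal] :
    (Subgroup.normalClosure ((inr : L →* M ⋊[φ] L).range : Set (M ⋊[φ] L))).comap inl ≤
      displacementSubgroup L M := by
  let ψ : M ⋊[φ] L →* M ⧸ displacementSubgroup L M :=
    lift (QuotientGroup.mk' _) 1 fun l ↦ MonoidHom.ext fun m ↦ by
      simpa using mk_smul_eq_mk l m
  have hN : Subgroup.normalClosure ((inr : L →* M ⋊[φ] L).range : Set (M ⋊[φ] L)) ≤ ψ.ker :=
    Subgroup.normalClosure_le_normal <| by
      rintro _ ⟨l, rfl⟩
      simp [ψ]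
  intro m hm
  simpa [ψ] using hN hm

theorem comap_inl_normalClosure_range_inr [(displacementSubgroup L M).Normal] :
    (Subgroup.normalClosure ((inr : L →* M ⋊[φ] L).range : Set (M ⋊[φ] L))).comap inl =
      displacementSubgroup L M :=
  le_antisymm comap_inl_normalClosure_range_inr_le_displacementSubgroup
    displacementSubgroup_le_comap_inl_normalClosure_range_inr

end SemidirectProduct

theorem perfect_iff_normalClosure_inr_eq_top_general
    {L M : Type*} [Group L] [Group M] [MulDistribMulAction L M]
    (d : M →* L)
    (hpeiffer : ∀ (m m' : M), (d m) • m' = m * m' * m⁻¹) :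
    Subgroup.closure {x : M | ∃ (l : L) (m : M), x = (l • m) * m⁻¹} = ⊤ ↔
    Subgroup.normalClosure
        ((MonoidHom.range
          (SemidirectProduct.inr : L →* M ⋊[MulDistribMulAction.toMulAut L M] L) :
            Subgroup (M ⋊[MulDistribMulAction.toMulAut L M] L)) :
          Set (M ⋊[MulDistribMulAction.toMulAut L M] L))
      = ⊤ := by
  have := MulDistribMulAction.displacementSubgroup_normal_of_peiffer d hpeiffer
  rw [SemidirectProduct.eq_top_iff_comap_inl_eq_top (Subgroup.le_normalClosure),
    SemidirectProduct.comap_inl_normalClosure_range_inr]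
  rfl

/-- An `L`-crossed module of groups is perfect (its displacement
subgroup is everything) if and only if the normal closure of `L` (embedded via
`inr`) in the semidirect product `M ⋊ L` is the whole group. -/
theorem perfect_iff_normalClosure_inr_eq_top
    {L M : Type*} [Group L] [Group M] [MulDistribMulAction L M]
    (d : M →* L)
    (hequiv : ∀ (l : L) (m : M), d (l • m) = l * d m * l⁻¹)
    (hpeiffer : ∀ (m m' : M), (d m) • m' = m * m' * m⁻¹) :
    Subgroup.closure {x : M | ∃ (l : L) (m : M), x = (l • m) * m⁻¹} = ⊤ ↔
    Subgroup.normalClosure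
        ((MonoidHom.range
          (SemidirectProduct.inr : L →* M ⋊[MulDistribMulAction.toMulAut L M] L) :
            Subgroup (M ⋊[MulDistribMulAction.toMulAut L M] L)) :
          Set (M ⋊[MulDistribMulAction.toMulAut L M] L))
      = ⊤ :=
  perfect_iff_normalClosure_inr_eq_top_general d hpeiffer
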